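/- In the 0,1 game, the strategy profile in which both agents always continue (choose 2 at every position) is rational and divergent: Rat_∞(s) and diverg(s) hold for this profile s; hence divergence is rational in the 0,1 game. -/

import Mathlib

noncomputable section

/-- The two agents. -/
inductive Ag : Type
  | A
  | B
deriving DecidableEq

/-- The set of choices `{1, 2}`. -/
inductive Choice : Type
  | one
  | two
deriving DecidableEq

/-- The polynomial functor whose final coalgebra is the set of finite or
infinite strategy profiles: a node is either an ending position carrying a
utility assignment (no children) or an internal position carrying an agent
and a choice (two children, indexed by `Bool`). -/
def SPF (Agent : Type) : PFunctor.{0} :=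
  ⟨(Agent → ℝ) ⊕ (Agent × Choice), fun x => Sum.rec (fun _ => Empty) (fun _ => Bool) x⟩

/-- Finite or infinite strategy profiles, as the M-type (final coalgebra). -/
def StratProf (Agent : Type) : Type :=
  (SPF Agent).M

/-- The ending position `⟨u⟩`. -/
def leafP {Agent : Type} (u : Agent → ℝ) : StratProf Agent :=
  PFunctor.M.mk ⟨Sum.inl u, fun e => Empty.elim e⟩

/-- The strategy profile `⟨a, c, s₁, s₂⟩`. -/
def nodeP {Agent : Type} (a : Agent) (c : Choice) (s₁ s₂ : StratProf Agent) :
    StratProf Agent :=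
  PFunctor.M.mk ⟨Sum.inr (a, c), fun b => bif b then s₂ else s₁⟩

/-- The child selected by choice `c`. -/
def cchild {Agent : Type} (c : Choice) (s₁ s₂ : StratProf Agent) : StratProf Agent :=
  match c with
  | .one => s₁
  | .two => s₂

/-- `conv s`: following the choices of `s` reaches an ending position after
finitely many steps (inductive definition). -/
inductive Conv {Agent : Type} : StratProf Agent → Prop
  | leaf (u : Agent → ℝ) : Conv (leafP u)
  | node1 (a : Agent) (s₁ s₂ : StratProf Agent) :
      Conv s₁ → Conv (nodeP a Choice.one s₁ s₂)
  | node2 (a : Agent) (s₁ s₂ : StratProf Agent) :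
      Conv s₂ → Conv (nodeP a Choice.two s₁ s₂)

/-- The graph of the (partial) utility assignment `ŝ`:
`UtilR s u` holds iff following the choices of `s` reaches the ending
position `⟨u⟩`. -/
inductive UtilR {Agent : Type} : StratProf Agent → (Agent → ℝ) → Prop
  | leaf (u : Agent → ℝ) : UtilR (leafP u) u
  | node1 (a : Agent) (s₁ s₂ : StratProf Agent) (u : Agent → ℝ) :
      UtilR s₁ u → UtilR (nodeP a Choice.one s₁ s₂) u
  | node2 (a : Agent) (s₁ s₂ : StratProf Agent) (u : Agent → ℝ) :
      UtilR s₂ u → UtilR (nodeP a Choice.two s₁ s₂) u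

open Classical in
/-- The utility assignment `ŝ` (an arbitrary default on non-convergent
profiles). -/
def util {Agent : Type} (s : StratProf Agent) : Agent → ℝ :=
  if h : ∃ u, UtilR s u then h.choose else fun _ => 0

/-- `□P`, the coinductive `always` modality: `P` holds at every position of
the strategy profile (greatest fixed point). -/
def Always {Agent : Type} (P : StratProf Agent → Prop) (s : StratProf Agent) : Prop :=
  ∃ R : StratProf Agent → Prop, R s ∧ ∀ t, R t →
    P t ∧ ∀ a c s₁ s₂, t = nodeP a c s₁ s₂ → R s₁ ∧ R s₂

/-- `PE s`: `s` is always-convergent and the choice at the root of `s` is at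
least as good, for the agent who owns the root, as the other choice. -/
def PE {Agent : Type} (s : StratProf Agent) : Prop :=
  Always Conv s ∧
    (∀ a s₁ s₂, s = nodeP a Choice.one s₁ s₂ → util s₁ a ≥ util s₂ a) ∧
    (∀ a s₁ s₂, s = nodeP a Choice.two s₁ s₂ → util s₂ a ≥ util s₁ a)

/-- Subgame perfect equilibrium: `□PE`. -/
def SPE {Agent : Type} : StratProf Agent → Prop :=
  Always PE

/-- `s =_g s'`: the two strategy profiles have the same underlying game
(coinductive definition). -/
def SameGame {Agent : Type} (s s' : StratProf Agent) : Prop :=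
  ∃ R : StratProf Agent → StratProf Agent → Prop, R s s' ∧ ∀ t t', R t t' →
    (∃ u, t = leafP u ∧ t' = leafP u) ∨
    (∃ a c c' s₁ s₂ s₁' s₂',
      t = nodeP a c s₁ s₂ ∧ t' = nodeP a c' s₁' s₂' ∧ R s₁ s₁' ∧ R s₂ s₂')

/-- `Rat_∞`: rationality for finite or infinite strategy profiles
(coinductive definition). -/
def RatInf {Agent : Type} (s : StratProf Agent) : Prop :=
  ∃ R : StratProf Agent → Prop, R s ∧ ∀ t, R t →
    (∃ u, t = leafP u) ∨
    (∃ a c s₁ s₂ s₁' s₂', t = nodeP a c s₁ s₂ ∧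
      SameGame (nodeP a c s₁' s₂') (nodeP a c s₁ s₂) ∧
      SPE (nodeP a c s₁' s₂') ∧ R (cchild c s₁ s₂))

/-- `diverg`: following the choices never reaches an ending position
(coinductive definition). -/
def Diverg {Agent : Type} (s : StratProf Agent) : Prop :=
  ∃ R : StratProf Agent → Prop, R s ∧ ∀ t, R t →
    ∃ a c s₁ s₂, t = nodeP a c s₁ s₂ ∧ R (cchild c s₁ s₂)

/-- The agent moving at position `n` of an infinite comb game: Alice at even
positions, Bob at odd positions. -/
def agAt (n : ℕ) : Ag :=
  if n % 2 = 0 then Ag.A else Ag.B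

/-- Leaf utilities of the 0,1 game at position `n`: the agent who quits
receives `0` and the other agent receives `1`. -/
def u01 (n : ℕ) : Ag → ℝ :=
  if n % 2 = 0 then fun x =>
    match x with
    | Ag.A => (0 : ℝ)
    | Ag.B => (1 : ℝ)
  else fun x =>
    match x with
    | Ag.A => (1 : ℝ)
    | Ag.B => (0 : ℝ)

/-- One corecursion step for the strategy profile of the 0,1 game determined
by the choice function `f : ℕ → Choice` (the choice made at each position). -/
def comb01Step (f : ℕ → Choice) : (ℕ ⊕ (Ag → ℝ)) → (SPF Ag).Obj (ℕ ⊕ (Ag → ℝ))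
  | Sum.inr u => ⟨Sum.inl u, fun e => Empty.elim e⟩
  | Sum.inl n =>
      ⟨Sum.inr (agAt n, f n),
        fun b => bif b then Sum.inl (n + 1) else Sum.inr (u01 n)⟩

/-- The strategy profile of the 0,1 game, starting at position `n`, in which
the choice at each position `m` is `f m`. -/
def comb01 (f : ℕ → Choice) (n : ℕ) : StratProf Ag :=
  PFunctor.M.corec (comb01Step f) (Sum.inl n)

/-!
Always continuing never reaches a leaf, so it diverges. For rationality, at position `k` use the
profile in which the agent moving at `k` always continues and the other agent always quits. It is
a subgame perfect equilibrium: a continuing agent is answered by an immediate quit and gets `1`,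
while a quitting agent gets `0` and would also get `0` by continuing, since the opponent continues
and the agent quits again one step later.
-/

section StratProf

variable {Agent : Type}

theorem leafP_injective : Function.Injective (leafP : (Agent → ℝ) → StratProf Agent) := by
  intro u v h
  exact Sum.inl.inj (congrArg Sigma.fst (PFunctor.M.mk_inj h))

theorem leafP_ne_nodeP {u : Agent → ℝ} {a : Agent} {c : Choice} {s₁ s₂ : StratProf Agent} :
    leafP u ≠ nodeP a c s₁ s₂ := fun h =>
  Sum.inl_ne_inr (congrArg Sigma.fst (PFunctor.M.mk_inj h))

theorem nodeP_inj {a a' : Agent} {c c' : Choice} {s₁ s₂ s₁' s₂' : StratProf Agent} :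
    nodeP a c s₁ s₂ = nodeP a' c' s₁' s₂' ↔ a = a' ∧ c = c' ∧ s₁ = s₁' ∧ s₂ = s₂' := by
  refine ⟨fun h => ?_, ?_⟩
  · obtain ⟨hac, hchildren⟩ := Sigma.mk.inj_iff.mp (PFunctor.M.mk_inj h)
    obtain ⟨rfl, rfl⟩ := Prod.mk.inj (Sum.inr.inj hac)
    have hchildren := eq_of_heq hchildren
    exact ⟨rfl, rfl, congrFun hchildren false, congrFun hchildren true⟩
  · rintro ⟨rfl, rfl, rfl, rfl⟩
    rfl

theorem UtilR.eq_of_leafP {u v : Agent → ℝ} (h : UtilR (leafP u) v) : v = u := by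
  generalize hs : leafP u = s at h
  cases h with
  | leaf => exact leafP_injective hs.symm
  | node1 | node2 => exact absurd hs leafP_ne_nodeP

theorem UtilR.of_nodeP_one {a : Agent} {s₁ s₂ : StratProf Agent} {u : Agent → ℝ}
    (h : UtilR (nodeP a .one s₁ s₂) u) : UtilR s₁ u := by
  generalize hs : nodeP a .one s₁ s₂ = s at h
  cases h with
  | leaf => exact absurd hs.symm leafP_ne_nodeP
  | node1 _ _ _ _ h => exact (nodeP_inj.mp hs).2.2.1 ▸ h
  | node2 => exact absurd (nodeP_inj.mp hs).2.1 (by decide)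

theorem UtilR.of_nodeP_two {a : Agent} {s₁ s₂ : StratProf Agent} {u : Agent → ℝ}
    (h : UtilR (nodeP a .two s₁ s₂) u) : UtilR s₂ u := by
  generalize hs : nodeP a .two s₁ s₂ = s at h
  cases h with
  | leaf => exact absurd hs.symm leafP_ne_nodeP
  | node1 => exact absurd (nodeP_inj.mp hs).2.1 (by decide)
  | node2 _ _ _ _ h => exact (nodeP_inj.mp hs).2.2.2 ▸ h

theorem UtilR.unique {s : StratProf Agent} {u v : Agent → ℝ} (hu : UtilR s u) (hv : UtilR s v) :
    u = v := by
  induction hu generalizing v with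
  | leaf => exact hv.eq_of_leafP.symm
  | node1 _ _ _ _ _ ih => exact ih hv.of_nodeP_one
  | node2 _ _ _ _ _ ih => exact ih hv.of_nodeP_two

theorem UtilR.util_eq {s : StratProf Agent} {u : Agent → ℝ} (h : UtilR s u) : util s = u := by
  have hex : ∃ u, UtilR s u := ⟨u, h⟩
  rw [util, dif_pos hex]
  exact hex.choose_spec.unique h

@[simp]
theorem util_leafP (u : Agent → ℝ) : util (leafP u) = u :=
  (UtilR.leaf u).util_eq

theorem util_nodeP_one (a : Agent) (s₁ s₂ : StratProf Agent) :
    util (nodeP a .one s₁ s₂) = util s₁ := by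
  by_cases h : ∃ u, UtilR s₁ u
  · obtain ⟨u, hu⟩ := h
    rw [hu.util_eq, (UtilR.node1 a s₁ s₂ u hu).util_eq]
  · have h' : ¬∃ u, UtilR (nodeP a .one s₁ s₂) u := fun ⟨u, hu⟩ => h ⟨u, hu.of_nodeP_one⟩
    rw [util, util, dif_neg h, dif_neg h']

theorem util_nodeP_two (a : Agent) (s₁ s₂ : StratProf Agent) :
    util (nodeP a .two s₁ s₂) = util s₂ := by
  by_cases h : ∃ u, UtilR s₂ u
  · obtain ⟨u, hu⟩ := h
    rw [hu.util_eq, (UtilR.node2 a s₁ s₂ u hu).util_eq]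
  · have h' : ¬∃ u, UtilR (nodeP a .two s₁ s₂) u := fun ⟨u, hu⟩ => h ⟨u, hu.of_nodeP_two⟩
    rw [util, util, dif_neg h, dif_neg h']

theorem always_leafP {P : StratProf Agent → Prop} {u : Agent → ℝ} (h : P (leafP u)) :
    Always P (leafP u) :=
  ⟨(· = leafP u), rfl, by
    rintro t rfl
    exact ⟨h, fun _ _ _ _ he => absurd he leafP_ne_nodeP⟩⟩

theorem pe_leafP (u : Agent → ℝ) : PE (leafP u) :=
  ⟨always_leafP (Conv.leaf u), fun _ _ _ he => absurd he leafP_ne_nodeP,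
    fun _ _ _ he => absurd he leafP_ne_nodeP⟩

theorem pe_nodeP_one {a : Agent} {s₁ s₂ : StratProf Agent}
    (hconv : Always Conv (nodeP a .one s₁ s₂)) (h : util s₂ a ≤ util s₁ a) :
    PE (nodeP a .one s₁ s₂) := by
  refine ⟨hconv, fun a' t₁ t₂ he => ?_, fun a' t₁ t₂ he => ?_⟩
  · obtain ⟨rfl, -, rfl, rfl⟩ := nodeP_inj.mp he
    exact h
  · exact absurd (nodeP_inj.mp he).2.1 (by decide)

theorem pe_nodeP_two {a : Agent} {s₁ s₂ : StratProf Agent}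
    (hconv : Always Conv (nodeP a .two s₁ s₂)) (h : util s₁ a ≤ util s₂ a) :
    PE (nodeP a .two s₁ s₂) := by
  refine ⟨hconv, fun a' t₁ t₂ he => ?_, fun a' t₁ t₂ he => ?_⟩
  · exact absurd (nodeP_inj.mp he).2.1 (by decide)
  · obtain ⟨rfl, -, rfl, rfl⟩ := nodeP_inj.mp he
    exact h

end StratProf

section Comb01

variable {f : ℕ → Choice}

theorem comb01_eq (f : ℕ → Choice) (n : ℕ) :
    comb01 f n = nodeP (agAt n) (f n) (leafP (u01 n)) (comb01 f (n + 1)) := by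
  have hleaf (u : Ag → ℝ) : PFunctor.M.corec (comb01Step f) (Sum.inr u) = leafP u := by
    rw [PFunctor.M.corec_def, leafP]
    simp only [comb01Step, PFunctor.map]
    congr 2
    funext e
    exact e.elim
  rw [comb01, PFunctor.M.corec_def, nodeP]
  simp only [comb01Step, PFunctor.map]
  congr 2
  funext b
  cases b
  · exact hleaf (u01 n)
  · rfl

theorem always_comb01 {P : StratProf Ag → Prop} (hnode : ∀ m, P (comb01 f m))
    (hleaf : ∀ u, P (leafP u)) (n : ℕ) : Always P (comb01 f n) := by
  refine ⟨fun t => (∃ m, t = comb01 f m) ∨ ∃ u, t = leafP u, .inl ⟨n, rfl⟩, ?_⟩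
  rintro t (⟨m, rfl⟩ | ⟨u, rfl⟩)
  · refine ⟨hnode m, fun a c s₁ s₂ he => ?_⟩
    obtain ⟨-, -, rfl, rfl⟩ := nodeP_inj.mp ((comb01_eq f m).symm.trans he)
    exact ⟨.inr ⟨u01 m, rfl⟩, .inl ⟨m + 1, rfl⟩⟩
  · exact ⟨hleaf u, fun _ _ _ _ he => absurd he leafP_ne_nodeP⟩

theorem sameGame_comb01 (f g : ℕ → Choice) (n : ℕ) : SameGame (comb01 f n) (comb01 g n) := by
  refine ⟨fun t t' => (∃ m, t = comb01 f m ∧ t' = comb01 g m) ∨ ∃ u, t = leafP u ∧ t' = leafP u,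
    .inl ⟨n, rfl, rfl⟩, ?_⟩
  rintro t t' (⟨m, rfl, rfl⟩ | ⟨u, rfl, rfl⟩)
  · exact .inr ⟨agAt m, f m, g m, _, _, _, _, comb01_eq f m, comb01_eq g m,
      .inr ⟨u01 m, rfl, rfl⟩, .inl ⟨m + 1, rfl, rfl⟩⟩
  · exact .inl ⟨u, rfl, rfl⟩

theorem ratInf_comb01 (hspe : ∀ m, ∃ g : ℕ → Choice, g m = f m ∧ SPE (comb01 g m)) (n : ℕ) :
    RatInf (comb01 f n) := by
  refine ⟨fun t => (∃ m, t = comb01 f m) ∨ ∃ u, t = leafP u, .inl ⟨n, rfl⟩, ?_⟩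
  rintro t (⟨m, rfl⟩ | ⟨u, rfl⟩)
  · obtain ⟨g, hgf, hg⟩ := hspe m
    have hgm := comb01_eq g m
    rw [hgf] at hgm
    refine .inr ⟨agAt m, f m, _, _, _, _, comb01_eq f m, ?_, hgm ▸ hg, ?_⟩
    · rw [← hgm, ← comb01_eq]
      exact sameGame_comb01 g f m
    · cases f m
      · exact .inr ⟨u01 m, rfl⟩
      · exact .inl ⟨m + 1, rfl⟩
  · exact .inl ⟨u, rfl⟩

theorem diverg_comb01_of_forall_eq_two (hf : ∀ m, f m = .two) (n : ℕ) : Diverg (comb01 f n) := by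
  refine ⟨fun t => ∃ m, t = comb01 f m, ⟨n, rfl⟩, ?_⟩
  rintro t ⟨m, rfl⟩
  refine ⟨agAt m, f m, _, _, comb01_eq f m, ?_⟩
  rw [hf m]
  exact ⟨m + 1, rfl⟩

theorem util_comb01_of_eq_one {m : ℕ} (h : f m = .one) : util (comb01 f m) = u01 m := by
  rw [comb01_eq, h, util_nodeP_one, util_leafP]

theorem util_comb01_of_eq_two {m : ℕ} (h : f m = .two) :
    util (comb01 f m) = util (comb01 f (m + 1)) := by
  rw [comb01_eq f m, h, util_nodeP_two]

theorem u01_succ_agAt (m : ℕ) : u01 (m + 1) (agAt m) = 1 := by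
  rcases Nat.mod_two_eq_zero_or_one m with h | h
  · simp [u01, agAt, h, Nat.succ_mod_two_eq_one_iff.mpr h]
  · simp [u01, agAt, h, Nat.succ_mod_two_eq_zero_iff.mpr h]

theorem u01_agAt_of_mod_two_eq {m m' : ℕ} (h : m' % 2 = m % 2) : u01 m' (agAt m) = 0 := by
  rcases Nat.mod_two_eq_zero_or_one m with hm | hm
  · simp [u01, agAt, hm, h]
  · simp [u01, agAt, hm, h]

end Comb01

def continueAtParity (p m : ℕ) : Choice :=
  if m % 2 = p % 2 then .two else .one

section ContinueAtParity

variable {p m : ℕ}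

theorem continueAtParity_of_mod_two_eq (h : m % 2 = p % 2) : continueAtParity p m = .two :=
  if_pos h

theorem continueAtParity_of_mod_two_ne (h : m % 2 ≠ p % 2) : continueAtParity p m = .one :=
  if_neg h

theorem conv_comb01_continueAtParity (p m : ℕ) : Conv (comb01 (continueAtParity p) m) := by
  by_cases h : m % 2 = p % 2
  · rw [comb01_eq, continueAtParity_of_mod_two_eq h, comb01_eq,
      continueAtParity_of_mod_two_ne (by omega)]
    exact .node2 _ _ _ (.node1 _ _ _ (.leaf _))
  · rw [comb01_eq, continueAtParity_of_mod_two_ne h]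
    exact .node1 _ _ _ (.leaf _)

theorem pe_comb01_continueAtParity (p m : ℕ) : PE (comb01 (continueAtParity p) m) := by
  have hconv := always_comb01 (conv_comb01_continueAtParity p) Conv.leaf m
  by_cases h : m % 2 = p % 2
  · have hquit : continueAtParity p (m + 1) = .one := continueAtParity_of_mod_two_ne (by omega)
    rw [comb01_eq, continueAtParity_of_mod_two_eq h] at hconv ⊢
    refine pe_nodeP_two hconv ?_
    rw [util_leafP, util_comb01_of_eq_one hquit, u01_agAt_of_mod_two_eq rfl, u01_succ_agAt]
    exact zero_le_one
  · have hcont : continueAtParity p (m + 1) = .two := continueAtParity_of_mod_two_eq (by omega)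
    have hquit : continueAtParity p (m + 2) = .one := continueAtParity_of_mod_two_ne (by omega)
    rw [comb01_eq, continueAtParity_of_mod_two_ne h] at hconv ⊢
    refine pe_nodeP_one hconv ?_
    rw [util_leafP, util_comb01_of_eq_two hcont, util_comb01_of_eq_one hquit,
      u01_agAt_of_mod_two_eq rfl, u01_agAt_of_mod_two_eq (by omega)]

theorem spe_comb01_continueAtParity (p m : ℕ) : SPE (comb01 (continueAtParity p) m) :=
  always_comb01 (pe_comb01_continueAtParity p) pe_leafP m

end ContinueAtParity

/-- In the 0,1 game, the strategy profile in which both agents always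
continue (choose 2 at every position) is rational and divergent; hence
divergence is rational in the 0,1 game. -/
theorem zeroOne_alwaysContinue_rat_and_diverg :
    RatInf (comb01 (fun _ => Choice.two) 0) ∧ Diverg (comb01 (fun _ => Choice.two) 0) :=
  ⟨ratInf_comb01 (fun m => ⟨continueAtParity m, continueAtParity_of_mod_two_eq rfl,
      spe_comb01_continueAtParity m m⟩) 0,
    diverg_comb01_of_forall_eq_two (fun _ => rfl) 0⟩
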